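/- The expected influence σ^(V,A) is submodular in the initial set: for all sets A ⊆ B ⊆ V and every node v ∈ V \ B, σ^(V, A ∪ {v}) − σ^(V,A) ≥ σ^(V, B ∪ {v}) − σ^(V,B). -/

import Mathlib

open Finset

noncomputable def cPath {V : Type*} [Fintype V] [DecidableEq V]
    (w : V → V → ℝ) (W D : Finset V) (j : V) : ℝ := by
  classical
  exact ∑' k : ℕ, ∑ x : Fin (k + 1) → V,
    if x 0 = j ∧ Function.Injective x ∧
        (∀ m : Fin (k + 1), (m : ℕ) < k → x m ∈ W \ D) ∧ x (Fin.last k) ∈ D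
    then ∏ i : Fin k, w (x i.succ) (x i.castSucc) else 0

noncomputable def cPathVia {V : Type*} [Fintype V] [DecidableEq V]
    (w : V → V → ℝ) (W D : Finset V) (j v : V) : ℝ := by
  classical
  exact ∑' k : ℕ, ∑ x : Fin (k + 1) → V,
    if x 0 = j ∧ Function.Injective x ∧
        (∀ m : Fin (k + 1), (m : ℕ) < k → x m ∈ W \ D) ∧ x (Fin.last k) ∈ D ∧
        (∃ u : Fin (k + 1), (u : ℕ) < k ∧ x u = v)
    then ∏ i : Fin k, w (x i.succ) (x i.castSucc) else 0

noncomputable def sigmaInfl {V : Type*} [Fintype V] [DecidableEq V]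
    (w : V → V → ℝ) (W A : Finset V) : ℝ :=
  ∑ j ∈ W, cPath w W A j

def pjv {V : Type*} (w : V → V → ℝ) (j v : V) : List V → ℝ
  | [] => w v j
  | l :: ls => w l j * pjv w l v ls

noncomputable def fPoly {ι : Type*} [DecidableEq ι] (m : ℕ) (T : Finset ι) (x : ι → ℝ) : ℝ :=
  (Nat.factorial m : ℝ) * ∑ S ∈ T.powersetCard m, ∏ s ∈ S, x s

/-!
First-step analysis. Let `g(U, D, j)` be the weight of the self-avoiding paths from `j` that avoid
the visited set `U` and stop on first entering `D`; it satisfies `g = 0` for `j ∈ U`, `g = 1` for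
`j ∈ D \ U`, and otherwise `g(U, D, j) = ∑_{i ≠ j} w(i, j) g(U ∪ {j}, D, i)`. Iterating this
recursion from `0` reaches `c(j → D) = g(∅, D, j)` after `|V|` steps, since self-avoiding paths
have fewer than `|V|` edges. The recursion preserves the three properties `g ≤ 1`, monotonicity
in `D`, and diminishing returns in `D`: the only new cases are `j = v`, where both increments are
`1 - g`, so monotonicity decides, and `j ∈ B`, where the left increment is `0`; in all remaining
cases the increments are nonnegative combinations of the previous ones.
-/

section PathWeight

variable {V : Type*} [Fintype V] [DecidableEq V] (w : V → V → ℝ)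

/-- The length-`k` summand of `cPath w univ D j`, restricted to paths avoiding `U`. -/
noncomputable def pathWeight (k : ℕ) (U D : Finset V) (j : V) : ℝ :=
  ∑ x : Fin (k + 1) → V,
    if x 0 = j ∧ Function.Injective x ∧ (∀ m : Fin (k + 1), (m : ℕ) < k → x m ∉ D) ∧
        x (Fin.last k) ∈ D ∧ ∀ m, x m ∉ U
    then ∏ i : Fin k, w (x i.succ) (x i.castSucc) else 0

variable {w} {k : ℕ} {U D : Finset V} {j : V}

lemma pathWeight_of_mem (h : j ∈ U) : pathWeight w k U D j = 0 :=
  sum_eq_zero fun _ _ => if_neg fun ⟨h0, _, _, _, hU⟩ => hU 0 (h0 ▸ h)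

lemma pathWeight_succ_of_mem (h : j ∈ D) : pathWeight w (k + 1) U D j = 0 :=
  sum_eq_zero fun _ _ => if_neg fun ⟨h0, _, hD, _⟩ => hD 0 k.succ_pos (h0 ▸ h)

lemma pathWeight_zero : pathWeight w 0 U D j = if j ∈ D ∧ j ∉ U then 1 else 0 := by
  rw [pathWeight, Fintype.sum_eq_single (fun _ => j)]
  · simp [Function.injective_of_subsingleton]
  · intro x hx
    refine if_neg fun ⟨h0, _⟩ => hx (funext fun m => ?_)
    rwa [Fin.fin_one_eq_zero m]

lemma pathWeight_succ (hU : j ∉ U) (hD : j ∉ D) :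
    pathWeight w (k + 1) U D j = ∑ i ∈ univ.erase j, w i j * pathWeight w k (insert j U) D i := by
  rw [sum_erase (f := fun i => w i j * pathWeight w k (insert j U) D i) _
    (by rw [pathWeight_of_mem (mem_insert_self j U), mul_zero])]
  simp only [pathWeight, mul_sum, mul_ite, mul_zero]
  rw [← (Fin.consEquiv fun _ => V).sum_comp, Fintype.sum_prod_type,
    Fintype.sum_eq_single j, sum_comm]
  · refine sum_congr rfl fun y _ => ?_
    rw [Fintype.sum_eq_single (y 0)]
    · refine if_congr ?_ ?_ rfl
      · simp only [Fin.consEquiv, Equiv.coe_fn_mk, Fin.cons_zero, Fin.cons_injective_iff,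
          Fin.forall_fin_succ, Fin.cons_succ, Fin.val_zero, Fin.val_succ, ← Fin.succ_last,
          Set.mem_range, mem_insert, Nat.succ_lt_succ_iff, Nat.zero_lt_succ, true_implies, true_and,
          not_or, not_exists, forall_and, hU, hD, not_false_eq_true]
        tauto
      · simp [Fin.prod_univ_succ]
    · exact fun i hi => if_neg fun ⟨h0, _⟩ => hi h0.symm
  · exact fun a ha => sum_eq_zero fun y _ => if_neg fun ⟨h0, _⟩ => ha (by simpa using h0)

end PathWeight

section DiminishingReturns

variable {V : Type*} [DecidableEq V]

def DiminishingReturns (g : Finset V → ℝ) : Prop :=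
  ∀ ⦃A B : Finset V⦄, A ⊆ B → ∀ v, g (insert v B) - g B ≤ g (insert v A) - g A

lemma DiminishingReturns.sum {ι : Type*} (s : Finset ι) {g : ι → Finset V → ℝ}
    (hg : ∀ i ∈ s, DiminishingReturns (g i)) : DiminishingReturns fun D => ∑ i ∈ s, g i D :=
  fun _ _ hAB v => by
    simpa only [← sum_sub_distrib] using sum_le_sum fun i hi => hg i hi hAB v

end DiminishingReturns

section HitStep

variable {V : Type*} [Fintype V] [DecidableEq V] (w : V → V → ℝ)

noncomputable def hitStep (f : Finset V → Finset V → V → ℝ) (U D : Finset V) (j : V) : ℝ :=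
  if j ∈ U then 0 else if j ∈ D then 1 else ∑ i ∈ univ.erase j, w i j * f (insert j U) D i

variable {w} {f : Finset V → Finset V → V → ℝ}

lemma hitStep_eq_one {U D : Finset V} {j : V} (hU : j ∉ U) (hD : j ∈ D) :
    hitStep w f U D j = 1 := by
  simp [hitStep, hU, hD]

lemma hitStep_le_one (hw0 : ∀ i j, 0 ≤ w i j) (hw1 : ∀ j, ∑ i ∈ univ.erase j, w i j ≤ 1)
    (hf : ∀ U D i, f U D i ≤ 1) (U D : Finset V) (j : V) : hitStep w f U D j ≤ 1 := by
  unfold hitStep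
  split_ifs
  · exact zero_le_one
  · exact le_rfl
  · calc ∑ i ∈ univ.erase j, w i j * f (insert j U) D i
        ≤ ∑ i ∈ univ.erase j, w i j := sum_le_sum fun i _ => mul_le_of_le_one_right (hw0 i j) (hf ..)
      _ ≤ 1 := hw1 j

lemma hitStep_mono (hw0 : ∀ i j, 0 ≤ w i j) (hw1 : ∀ j, ∑ i ∈ univ.erase j, w i j ≤ 1)
    (hf : ∀ U D i, f U D i ≤ 1) (hf_mono : ∀ U i, Monotone (f U · i)) (U : Finset V) (j : V) :
    Monotone (hitStep w f U · j) := by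
  intro D D' hDD'
  dsimp only
  by_cases hU : j ∈ U
  · simp [hitStep, hU]
  by_cases hD : j ∈ D
  · rw [hitStep_eq_one hU hD, hitStep_eq_one hU (hDD' hD)]
  by_cases hD' : j ∈ D'
  · calc hitStep w f U D j ≤ 1 := hitStep_le_one hw0 hw1 hf U D j
      _ = hitStep w f U D' j := (hitStep_eq_one hU hD').symm
  · simp only [hitStep, hU, hD, hD', if_false]
    exact sum_le_sum fun i _ => mul_le_mul_of_nonneg_left (hf_mono _ _ hDD') (hw0 i j)

lemma hitStep_diminishingReturns (hw0 : ∀ i j, 0 ≤ w i j)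
    (hw1 : ∀ j, ∑ i ∈ univ.erase j, w i j ≤ 1) (hf : ∀ U D i, f U D i ≤ 1)
    (hf_mono : ∀ U i, Monotone (f U · i)) (hf_dr : ∀ U i, DiminishingReturns (f U · i))
    (U : Finset V) (j : V) : DiminishingReturns (hitStep w f U · j) := by
  intro A B hAB v
  dsimp only
  have hmono := hitStep_mono hw0 hw1 hf hf_mono U j
  by_cases hU : j ∈ U
  · simp [hitStep, hU]
  by_cases hjv : j = v
  · subst hjv
    rw [hitStep_eq_one hU (mem_insert_self j B), hitStep_eq_one hU (mem_insert_self j A)]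
    exact sub_le_sub_left (hmono hAB) 1
  by_cases hB : j ∈ B
  · rw [hitStep_eq_one hU (mem_insert_of_mem hB), hitStep_eq_one hU hB, sub_self, sub_nonneg]
    exact hmono (subset_insert v A)
  have hA : j ∉ A := fun h => hB (hAB h)
  simp only [hitStep, hU, hA, hB, mem_insert, hjv, false_or, if_false, ← sum_sub_distrib,
    ← mul_sub]
  exact sum_le_sum fun i _ => mul_le_mul_of_nonneg_left (hf_dr _ _ hAB v) (hw0 i j)

end HitStep

section HitWeight

variable {V : Type*} [Fintype V] [DecidableEq V] (w : V → V → ℝ)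

noncomputable def hitWeight (n : ℕ) : Finset V → Finset V → V → ℝ :=
  (hitStep w)^[n] 0

variable {w}

lemma hitWeight_succ (n : ℕ) : hitWeight w (n + 1) = hitStep w (hitWeight w n) :=
  Function.iterate_succ_apply' _ _ _

lemma hitWeight_eq_sum_pathWeight (D : Finset V) (n : ℕ) (U : Finset V) (j : V) :
    hitWeight w n U D j = ∑ k ∈ range n, pathWeight w k U D j := by
  induction n generalizing U j with
  | zero => rfl
  | succ n ih =>
    rw [hitWeight_succ, sum_range_succ', hitStep]
    by_cases hU : j ∈ U
    · simp [hU, pathWeight_of_mem]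
    by_cases hD : j ∈ D
    · simp [hU, hD, pathWeight_succ_of_mem, pathWeight_zero]
    · simp [hU, hD, pathWeight_succ, pathWeight_zero, ih, mul_sum, sum_comm (s := range n)]

lemma cPath_univ_eq_hitWeight (D : Finset V) (j : V) :
    cPath w univ D j = hitWeight w (Fintype.card V) ∅ D j := by
  rw [hitWeight_eq_sum_pathWeight, cPath, tsum_eq_sum]
  · refine sum_congr rfl fun k _ => sum_congr rfl fun x _ => if_congr ?_ rfl rfl
    simp
  · intro k hk
    refine sum_eq_zero fun x _ => if_neg fun ⟨_, hx, _⟩ => hk ?_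
    simpa using Fintype.card_le_of_injective x hx

lemma hitWeight_le_one (hw0 : ∀ i j, 0 ≤ w i j) (hw1 : ∀ j, ∑ i ∈ univ.erase j, w i j ≤ 1) :
    ∀ n U D j, hitWeight w n U D j ≤ 1
  | 0, _, _, _ => zero_le_one
  | n + 1, U, D, j => by
    rw [hitWeight_succ]
    exact hitStep_le_one hw0 hw1 (hitWeight_le_one hw0 hw1 n) U D j

lemma hitWeight_mono (hw0 : ∀ i j, 0 ≤ w i j) (hw1 : ∀ j, ∑ i ∈ univ.erase j, w i j ≤ 1) :
    ∀ n U j, Monotone (hitWeight w n U · j)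
  | 0, _, _ => monotone_const
  | n + 1, U, j => by
    rw [hitWeight_succ]
    exact hitStep_mono hw0 hw1 (hitWeight_le_one hw0 hw1 n) (hitWeight_mono hw0 hw1 n) U j

lemma hitWeight_diminishingReturns (hw0 : ∀ i j, 0 ≤ w i j)
    (hw1 : ∀ j, ∑ i ∈ univ.erase j, w i j ≤ 1) :
    ∀ n U j, DiminishingReturns (hitWeight w n U · j)
  | 0, _, _ => fun _ _ _ _ => le_rfl
  | n + 1, U, j => by
    rw [hitWeight_succ]
    exact hitStep_diminishingReturns hw0 hw1 (hitWeight_le_one hw0 hw1 n)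
      (hitWeight_mono hw0 hw1 n) (hitWeight_diminishingReturns hw0 hw1 n) U j

end HitWeight

theorem stmt12_general {V : Type*} [Fintype V] [DecidableEq V] (w : V → V → ℝ)
    (hw0 : ∀ i j : V, 0 ≤ w i j)
    (hw1 : ∀ j : V, ∑ i ∈ Finset.univ.erase j, w i j ≤ 1)
    (A B : Finset V) (hAB : A ⊆ B) (v : V) :
    sigmaInfl w Finset.univ (insert v B) - sigmaInfl w Finset.univ B
      ≤ sigmaInfl w Finset.univ (insert v A) - sigmaInfl w Finset.univ A := by
  have hσ (D : Finset V) : sigmaInfl w univ D = ∑ j, hitWeight w (Fintype.card V) ∅ D j :=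
    sum_congr rfl fun j _ => cPath_univ_eq_hitWeight D j
  simp only [hσ]
  exact DiminishingReturns.sum univ (fun j _ => hitWeight_diminishingReturns hw0 hw1 _ ∅ j) hAB v

theorem stmt12 {V : Type*} [Fintype V] [DecidableEq V] (w : V → V → ℝ)
    (hw0 : ∀ i j : V, 0 ≤ w i j)
    (hw1 : ∀ j : V, ∑ i ∈ Finset.univ.erase j, w i j ≤ 1)
    (A B : Finset V) (hAB : A ⊆ B) (v : V) (hv : v ∉ B) :
    sigmaInfl w Finset.univ (insert v B) - sigmaInfl w Finset.univ B
      ≤ sigmaInfl w Finset.univ (insert v A) - sigmaInfl w Finset.univ A :=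
  stmt12_general w hw0 hw1 A B hAB v
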